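/- Let C ⊆ ℝ^n be a compact convex set, f : ℝ^n → ℝ convex and differentiable on an open set containing C, and suppose (C,f) satisfies both the strong (M,0)-growth property and the weak (M,r)-growth property for some M > 0 and r ∈ [0,1). Let ℓ ∈ ℕ with ℓ ≥ 1, η_t = ℓ/(t+ℓ), and ε ∈ (0,ℓ). Then for the iterates of the Frank–Wolfe algorithm with these step sizes, either there exists a strictly increasing sequence (t_i)_{i∈ℕ} of indices with subopt_{t_i} ≤ (η_{t_i}·ℓM/(2ε))^{1/(1−r)} for all i, or there exists R ∈ ℕ with R ≥ 1 such that for all t ≥ R+1: subopt_t ≤ subopt_R · (η_{t−1}/η_{R−1})^{ℓ−ε} · exp(εℓ/R). -/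

import Mathlib

/-!
If the iterates meet the threshold `(η_t ℓ M / (2ε))^{1/(1-r)}` infinitely often, enumerate them.
Otherwise `subopt_t` exceeds it from some `R` on; there weak growth bounds the Bregman term of the
step by `(ε/ℓ) η_t gap_t`, and `gap ≥ subopt` (convexity) gives
`subopt_{t+1} ≤ (t + ε)/(t + ℓ) · subopt_t`. The tangent-line bound for `log` at `k + ℓ - 1` gives
`(k + ε)/(k + ℓ) ≤ ((k + ℓ - 1)/(k + ℓ))^{ℓ-ε} · exp (ε / ((k + ℓ - 1)(k + ℓ)))`; over `k ∈ [R, t)`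
the powers telescope to `(η_{t-1}/η_{R-1})^{ℓ-ε}` and the exponents sum to at most `ε/R`.
-/

open Set Finset Real Pointwise

noncomputable section

abbrev Eucl (n : ℕ) := EuclideanSpace ℝ (Fin n)

variable {n : ℕ}

/-- A Frank–Wolfe vertex at `x`: a minimizer over `C` of the linear function `y ↦ ⟪∇f(x), y⟫`. -/
def IsFWVertex (C : Set (Eucl n)) (f : Eucl n → ℝ) (x v : Eucl n) : Prop :=
  v ∈ C ∧ ∀ y ∈ C, (inner ℝ (gradient f x) v : ℝ) ≤ (inner ℝ (gradient f x) y : ℝ)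

/-- The Wolfe gap `gap(x) = max_{y ∈ C} ⟪∇f(x), x - y⟫`. -/
def gapF (C : Set (Eucl n)) (f : Eucl n → ℝ) (x : Eucl n) : ℝ :=
  sSup ((fun y => (inner ℝ (gradient f x) (x - y) : ℝ)) '' C)

/-- The primal suboptimality gap `subopt(x) = f(x) - min_{y ∈ C} f(y)`. -/
def suboptF (C : Set (Eucl n)) (f : Eucl n → ℝ) (x : Eucl n) : ℝ :=
  f x - sInf (f '' C)

/-- Bregman divergence `D_f(y, x) = f(y) - f(x) - ⟪∇f(x), y - x⟫`. -/
def bregmanD (f : Eucl n → ℝ) (y x : Eucl n) : ℝ :=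
  f y - f x - (inner ℝ (gradient f x) (y - x) : ℝ)

/-- Strong `(M, r)`-growth property. -/
def StrongGrowth (C : Set (Eucl n)) (f : Eucl n → ℝ) (M r : ℝ) : Prop :=
  ∀ x ∈ C, ∀ v, IsFWVertex C f x v → ∀ η ∈ Icc (0:ℝ) 1,
    bregmanD f (x + η • (v - x)) x ≤ M * η ^ 2 / 2 * gapF C f x ^ r

/-- Weak `(M, r)`-growth property. -/
def WeakGrowth (C : Set (Eucl n)) (f : Eucl n → ℝ) (M r : ℝ) : Prop :=
  ∀ x ∈ C, ∀ v, IsFWVertex C f x v → ∀ η ∈ Icc (0:ℝ) 1,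
    bregmanD f (x + η • (v - x)) x * suboptF C f x ^ (1 - r) ≤ M * η ^ 2 / 2 * gapF C f x

/-- Gaps `(m, r)`-growth property. -/
def GapsGrowth (C : Set (Eucl n)) (f : Eucl n → ℝ) (m r : ℝ) : Prop :=
  ∀ x ∈ C, m * suboptF C f x ^ (1 - r) ≤ gapF C f x

/-- `primaldual_t = min_{0 ≤ k ≤ t} (f(x_t) - f(x_k) + gap_k)`. -/
def primaldualSeq (C : Set (Eucl n)) (f : Eucl n → ℝ) (x : ℕ → Eucl n) (t : ℕ) : ℝ :=
  (Finset.range (t + 1)).inf' (Finset.nonempty_range_iff.mpr (Nat.succ_ne_zero t))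
    (fun k => f (x t) - f (x k) + gapF C f (x k))

theorem ConvexOn.le_sub_of_hasFDerivAt {E : Type*} [NormedAddCommGroup E] [NormedSpace ℝ E]
    {s : Set E} {f : E → ℝ} {f' : E →L[ℝ] ℝ} {x y : E} (hf : ConvexOn ℝ s f)
    (hx : x ∈ s) (hy : y ∈ s) (hf' : HasFDerivAt f f' x) :
    f' (y - x) ≤ f y - f x := by
  let g : ℝ →ᵃ[ℝ] E := AffineMap.lineMap x y
  have hline : ConvexOn ℝ (g ⁻¹' s) (f ∘ g) := hf.comp_affineMap g
  have hderiv : HasDerivAt (f ∘ g) (f' (y - x)) 0 :=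
    (by simpa [g] using hf' : HasFDerivAt f f' (g 0)).comp_hasDerivAt 0
      AffineMap.hasDerivAt_lineMap
  simpa [g, slope_def_field] using
    hline.le_slope_of_hasDerivAt (by simpa [g] using hx) (by simpa [g] using hy) zero_lt_one hderiv

theorem div_le_rpow_mul_exp {b s ε : ℝ} (hb : 1 < b) (hsb : s < b) (hs : 1 - s ≤ ε)
    (hε : 0 ≤ ε) : (b - s) / b ≤ ((b - 1) / b) ^ s * exp (ε / ((b - 1) * b)) := by
  have hb1 : 0 < b - 1 := by linarith
  have hb0 : 0 < b := by linarith
  set L := log ((b - 1) / b)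
  have hL_lower : -(b - 1)⁻¹ ≤ L := by
    have := one_sub_inv_le_log_of_pos (x := (b - 1) / b) (by positivity)
    rw [inv_div] at this
    have e : 1 - b / (b - 1) = -(b - 1)⁻¹ := by field_simp; ring
    linarith
  have hL_upper : L ≤ -b⁻¹ := by
    have := log_le_sub_one_of_pos (x := (b - 1) / b) (by positivity)
    have e : (b - 1) / b - 1 = -b⁻¹ := by field_simp; ring
    linarith
  have htangent : log ((b - s) / (b - 1)) ≤ (1 - s) / (b - 1) := by
    have := log_le_sub_one_of_pos (x := (b - s) / (b - 1)) (div_pos (by linarith) hb1)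
    have e : (b - s) / (b - 1) - 1 = (1 - s) / (b - 1) := by field_simp; ring
    linarith
  have hsplit : log ((b - s) / b) = log ((b - s) / (b - 1)) + L := by
    rw [← log_mul (by positivity) (by positivity)]
    congr 1; field_simp
  have hD : (1 - s) * ((b - 1)⁻¹ + L) ≤ ε / ((b - 1) * b) := by
    have e : ε / ((b - 1) * b) = ε * ((b - 1)⁻¹ - b⁻¹) := by field_simp; ring
    rw [e]
    calc (1 - s) * ((b - 1)⁻¹ + L) ≤ ε * ((b - 1)⁻¹ + L) := by
          gcongr; linarith
      _ ≤ ε * ((b - 1)⁻¹ - b⁻¹) := by gcongr; linarith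
  rw [← exp_log (div_pos (by linarith) hb0 : 0 < (b - s) / b),
    rpow_def_of_pos (by positivity), ← exp_add]
  gcongr
  calc log ((b - s) / b) = log ((b - s) / (b - 1)) + L := hsplit
    _ ≤ (1 - s) / (b - 1) + L := by linarith
    _ = L * s + (1 - s) * ((b - 1)⁻¹ + L) := by ring
    _ ≤ L * s + ε / ((b - 1) * b) := by linarith

theorem le_mul_prod_Ico_of_le_mul {a q : ℕ → ℝ} {R t : ℕ} (hRt : R ≤ t)
    (hq : ∀ k, R ≤ k → 0 ≤ q k) (ha : ∀ k, R ≤ k → a (k + 1) ≤ q k * a k) :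
    a t ≤ a R * ∏ k ∈ Finset.Ico R t, q k := by
  induction t, hRt using Nat.le_induction with
  | base => simp
  | succ t hRt ih =>
    rw [Finset.prod_Ico_succ_top hRt, ← mul_assoc, mul_comm _ (q t)]
    exact (ha t hRt).trans (mul_le_mul_of_nonneg_left ih (hq t hRt))

theorem prod_Ico_div_le {ℓ ε : ℝ} (hℓ : 1 ≤ ℓ) (hε : 0 ≤ ε) {R t : ℕ} (hR : 1 ≤ R)
    (hRt : R ≤ t) :
    ∏ k ∈ Finset.Ico R t, ((k : ℝ) + ε) / (k + ℓ) ≤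
      ((R + ℓ - 1) / (t + ℓ - 1)) ^ (ℓ - ε) * exp (ε / (R + ℓ - 1) - ε / (t + ℓ - 1)) := by
  have hR1 : (1 : ℝ) ≤ R := by exact_mod_cast hR
  have hR0 : 0 < (R : ℝ) + ℓ - 1 := by linarith
  induction t, hRt using Nat.le_induction with
  | base => simp [div_self hR0.ne']
  | succ t hRt ih =>
    have ht : (R : ℝ) ≤ t := by exact_mod_cast hRt
    have ht1 : 0 < (t : ℝ) + ℓ - 1 := by linarith
    have ht2 : 0 < (t : ℝ) + ℓ := by linarith
    have hfactor := div_le_rpow_mul_exp (b := t + ℓ) (s := ℓ - ε) (ε := ε)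
      (by linarith) (by linarith) (by linarith) hε
    rw [show (t : ℝ) + ℓ - (ℓ - ε) = t + ε by ring] at hfactor
    rw [Finset.prod_Ico_succ_top hRt, show ((t + 1 : ℕ) : ℝ) + ℓ - 1 = t + ℓ by push_cast; ring]
    calc (∏ k ∈ Finset.Ico R t, ((k : ℝ) + ε) / (k + ℓ)) * ((t + ε) / (t + ℓ))
        ≤ (((R + ℓ - 1) / (t + ℓ - 1)) ^ (ℓ - ε) * exp (ε / (R + ℓ - 1) - ε / (t + ℓ - 1))) *
          (((t + ℓ - 1) / (t + ℓ)) ^ (ℓ - ε) * exp (ε / ((t + ℓ - 1) * (t + ℓ)))) :=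
          mul_le_mul ih hfactor (by positivity) (by positivity)
      _ = ((R + ℓ - 1) / (t + ℓ)) ^ (ℓ - ε) * exp (ε / (R + ℓ - 1) - ε / (t + ℓ)) := by
          rw [mul_mul_mul_comm, ← mul_rpow (by positivity) (by positivity), ← exp_add]
          congr 2
          · field_simp
          · field_simp; ring

theorem le_mul_rpow_mul_exp_of_le_div_mul {a : ℕ → ℝ} {ℓ ε : ℝ} (hℓ : 1 ≤ ℓ) (hε : 0 ≤ ε)
    {R t : ℕ} (hR : 1 ≤ R) (hRt : R ≤ t) (haR : 0 ≤ a R)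
    (ha : ∀ k, R ≤ k → a (k + 1) ≤ (k + ε) / (k + ℓ) * a k) :
    a t ≤ a R * ((R + ℓ - 1) / (t + ℓ - 1)) ^ (ℓ - ε) * exp (ε * ℓ / R) := by
  have hR1 : (1 : ℝ) ≤ R := by exact_mod_cast hR
  have ht : (R : ℝ) ≤ t := by exact_mod_cast hRt
  have hexp : ε / (R + ℓ - 1) - ε / (t + ℓ - 1) ≤ ε * ℓ / R := by
    have h1 : 0 ≤ ε / (t + ℓ - 1) := div_nonneg hε (by linarith)
    have h2 : ε / (R + ℓ - 1) ≤ ε / R := div_le_div_of_nonneg_left hε (by linarith) (by linarith)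
    have h3 : ε / R ≤ ε * ℓ / R := by gcongr; exact le_mul_of_one_le_right hε hℓ
    linarith
  calc a t ≤ a R * ∏ k ∈ Finset.Ico R t, ((k : ℝ) + ε) / (k + ℓ) :=
        le_mul_prod_Ico_of_le_mul hRt (fun k _ => by positivity) ha
    _ ≤ a R * (((R + ℓ - 1) / (t + ℓ - 1)) ^ (ℓ - ε) *
          exp (ε / (R + ℓ - 1) - ε / (t + ℓ - 1))) :=
        mul_le_mul_of_nonneg_left (prod_Ico_div_le hℓ hε hR hRt) haR
    _ ≤ a R * ((R + ℓ - 1) / (t + ℓ - 1)) ^ (ℓ - ε) * exp (ε * ℓ / R) := by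
        rw [← mul_assoc]
        exact mul_le_mul_of_nonneg_left (exp_le_exp.2 hexp)
          (mul_nonneg haR (rpow_nonneg (div_nonneg (by linarith) (by linarith)) _))

theorem Convex.mem_of_step_eq_add_smul_sub {E : Type*} [AddCommGroup E] [Module ℝ E] {s : Set E}
    (hs : Convex ℝ s) {x v : ℕ → E} {η : ℕ → ℝ} (hx0 : x 0 ∈ s) (hv : ∀ t, v t ∈ s)
    (hη : ∀ t, η t ∈ Icc (0 : ℝ) 1) (hstep : ∀ t, x (t + 1) = x t + η t • (v t - x t)) (t : ℕ) :
    x t ∈ s := by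
  induction t with
  | zero => exact hx0
  | succ t ih => rw [hstep]; exact hs.add_smul_sub_mem ih (hv t) (hη t)

section FrankWolfe

variable {C : Set (Eucl n)} {f : Eucl n → ℝ} {x v : Eucl n}

theorem IsFWVertex.gapF_eq (hv : IsFWVertex C f x v) :
    gapF C f x = inner ℝ (gradient f x) (x - v) := by
  refine IsGreatest.csSup_eq ⟨⟨v, hv.1, rfl⟩, ?_⟩
  rintro _ ⟨y, hy, rfl⟩
  simp only [inner_sub_right]
  linarith [hv.2 y hy]

theorem IsFWVertex.gapF_nonneg (hv : IsFWVertex C f x v) (hx : x ∈ C) : 0 ≤ gapF C f x := by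
  rw [hv.gapF_eq, inner_sub_right]
  linarith [hv.2 x hx]

theorem IsFWVertex.suboptF_le_gapF (hv : IsFWVertex C f x v) (hf : ConvexOn ℝ C f)
    (hx : x ∈ C) (hfx : DifferentiableAt ℝ f x) : suboptF C f x ≤ gapF C f x := by
  have hlower : ∀ y ∈ C, f x - gapF C f x ≤ f y := by
    intro y hy
    have hfirst : inner ℝ (gradient f x) (y - x) ≤ f y - f x :=
      hf.le_sub_of_hasFDerivAt hx hy hfx.hasGradientAt.hasFDerivAt
    rw [hv.gapF_eq, inner_sub_right]
    rw [inner_sub_right] at hfirst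
    linarith [hv.2 y hy]
  have := le_csInf (Set.Nonempty.image f ⟨x, hx⟩) (Set.forall_mem_image.2 hlower)
  rw [suboptF]
  linarith

theorem IsFWVertex.suboptF_add_smul_sub (hv : IsFWVertex C f x v) (η : ℝ) :
    suboptF C f (x + η • (v - x)) =
      suboptF C f x - η * gapF C f x + bregmanD f (x + η • (v - x)) x := by
  rw [suboptF, suboptF, bregmanD, hv.gapF_eq, add_sub_cancel_left, inner_smul_right,
    ← neg_sub x v, inner_neg_right]
  ring

theorem WeakGrowth.suboptF_add_smul_sub_le {M r ℓ ε η : ℝ} (hw : WeakGrowth C f M r)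
    (hM : 0 ≤ M) (hr : r < 1) (hf : ConvexOn ℝ C f) (hx : x ∈ C)
    (hfx : DifferentiableAt ℝ f x) (hv : IsFWVertex C f x v) (hη : η ∈ Icc (0 : ℝ) 1)
    (hε : ε ∈ Ioc 0 ℓ) (hfar : (η * ℓ * M / (2 * ε)) ^ (1 / (1 - r)) < suboptF C f x) :
    suboptF C f (x + η • (v - x)) ≤ (1 - (1 - ε / ℓ) * η) * suboptF C f x := by
  obtain ⟨hε0, hεℓ⟩ := hε
  have hℓ0 : 0 < ℓ := hε0.trans_le hεℓ
  set S := suboptF C f x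
  set G := gapF C f x
  set D := bregmanD f (x + η • (v - x)) x
  have hG : 0 ≤ G := hv.gapF_nonneg hx
  have hSG : S ≤ G := hv.suboptF_le_gapF hf hx hfx
  have hthr : 0 ≤ η * ℓ * M / (2 * ε) := by have := hη.1; positivity
  have hfar' : η * ℓ * M / (2 * ε) < S ^ (1 - r) :=
    (rpow_inv_lt_iff_of_pos hthr ((rpow_nonneg hthr _).trans hfar.le) (by linarith)).1
      (by simpa only [one_div] using hfar)
  have hSr : 0 < S ^ (1 - r) := hthr.trans_lt hfar'
  have hD : D ≤ ε / ℓ * η * G := by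
    refine le_of_mul_le_mul_right ?_ hSr
    calc D * S ^ (1 - r) ≤ M * η ^ 2 / 2 * G := hw x hx v hv η hη
      _ = ε / ℓ * η * G * (η * ℓ * M / (2 * ε)) := by field_simp
      _ ≤ ε / ℓ * η * G * S ^ (1 - r) := by
          have := hη.1
          gcongr
  have hcoef : 0 ≤ (1 - ε / ℓ) * η :=
    mul_nonneg (sub_nonneg.2 ((div_le_one hℓ0).2 hεℓ)) hη.1
  rw [hv.suboptF_add_smul_sub]
  nlinarith

end FrankWolfe

theorem fw_weak_growth_dichotomy_general
    (n : ℕ) (C : Set (Eucl n)) (f : Eucl n → ℝ)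
    (hCconv : Convex ℝ C)
    (hfconv : ConvexOn ℝ C f)
    (U : Set (Eucl n)) (hUopen : IsOpen U) (hCU : C ⊆ U)
    (hfdiff : DifferentiableOn ℝ f U)
    (M r : ℝ) (hM : 0 < M) (hr : r ∈ Ico (0 : ℝ) 1)
    (hweak : WeakGrowth C f M r)
    (ℓ : ℕ) (hℓ : 1 ≤ ℓ)
    (η : ℕ → ℝ) (hη : ∀ t : ℕ, η t = (ℓ : ℝ) / ((t : ℝ) + ℓ))
    (x v : ℕ → Eucl n)
    (hx0 : x 0 ∈ C)
    (hv : ∀ t : ℕ, IsFWVertex C f (x t) (v t))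
    (hstep : ∀ t : ℕ, x (t + 1) = x t + η t • (v t - x t))
    (ε : ℝ) (hε : ε ∈ Ioo (0 : ℝ) (ℓ : ℝ)) :
    (∃ ts : ℕ → ℕ, StrictMono ts ∧
        ∀ i : ℕ, suboptF C f (x (ts i)) ≤
          (η (ts i) * ℓ * M / (2 * ε)) ^ (1 / (1 - r))) ∨
      (∃ R : ℕ, 1 ≤ R ∧ ∀ t : ℕ, R + 1 ≤ t →
        suboptF C f (x t) ≤
          suboptF C f (x R) * (η (t - 1) / η (R - 1)) ^ ((ℓ : ℝ) - ε) *
            Real.exp (ε * ℓ / R)) := by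
  have hℓ1 : (1 : ℝ) ≤ ℓ := by exact_mod_cast hℓ
  have hηI : ∀ t, η t ∈ Icc (0 : ℝ) 1 := fun t => by
    rw [hη]
    exact ⟨by positivity, div_le_one_of_le₀ (by linarith [t.cast_nonneg (α := ℝ)]) (by positivity)⟩
  have hxC := hCconv.mem_of_step_eq_add_smul_sub hx0 (fun t => (hv t).1) hηI hstep
  by_cases hinf : {t | suboptF C f (x t) ≤ (η t * ℓ * M / (2 * ε)) ^ (1 / (1 - r))}.Infinite
  · exact Or.inl ⟨Nat.nth _, Nat.nth_strictMono hinf, Nat.nth_mem_of_infinite hinf⟩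
  obtain ⟨N, hN⟩ := (Set.not_infinite.1 hinf).bddAbove
  have hfar : ∀ k, N + 1 ≤ k → (η k * ℓ * M / (2 * ε)) ^ (1 / (1 - r)) < suboptF C f (x k) :=
    fun k hk => not_le.1 fun hle => by have := hN hle; omega
  have hcontract : ∀ k, N + 1 ≤ k →
      suboptF C f (x (k + 1)) ≤ (k + ε) / (k + ℓ) * suboptF C f (x k) := fun k hk => by
    rw [hstep, show (k + ε) / (k + ℓ) = 1 - (1 - ε / ℓ) * η k by rw [hη]; field_simp; ring]
    exact hweak.suboptF_add_smul_sub_le hM.le hr.2 hfconv (hxC k)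
      ((hfdiff _ (hCU (hxC k))).differentiableAt (hUopen.mem_nhds (hCU (hxC k)))) (hv k) (hηI k)
      ⟨hε.1, hε.2.le⟩ (hfar k hk)
  refine Or.inr ⟨N + 1, le_add_self, fun t ht => ?_⟩
  have hratio : η (t - 1) / η (N + 1 - 1) = ((N + 1 : ℕ) + ℓ - 1) / (t + ℓ - 1) := by
    rw [hη, hη, Nat.add_sub_cancel, Nat.cast_sub (by omega)]
    field_simp
    push_cast
    ring
  rw [hratio]
  exact le_mul_rpow_mul_exp_of_le_div_mul (a := fun k => suboptF C f (x k)) (R := N + 1)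
    hℓ1 hε.1.le le_add_self (by omega)
    ((rpow_nonneg (by have := (hηI (N + 1)).1; have := hε.1; positivity) _).trans
      (hfar _ le_rfl).le) hcontract

/-- **Theorem (weak `(M,r)`-growth, dichotomy).** Either a strictly increasing subsequence of
iterations realizes the fast bound, or from some iteration `R ≥ 1` onwards the
`O(t^{-(ℓ-ε)})` bound relative to iteration `R` holds. -/
theorem fw_weak_growth_dichotomy
    (n : ℕ) (C : Set (Eucl n)) (f : Eucl n → ℝ)
    (hCcomp : IsCompact C) (hCconv : Convex ℝ C) (hCne : C.Nonempty)
    (hfconv : ConvexOn ℝ C f)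
    (U : Set (Eucl n)) (hUopen : IsOpen U) (hCU : C ⊆ U)
    (hfdiff : DifferentiableOn ℝ f U)
    (M r : ℝ) (hM : 0 < M) (hr : r ∈ Ico (0 : ℝ) 1)
    (hstrong : StrongGrowth C f M 0) (hweak : WeakGrowth C f M r)
    (ℓ : ℕ) (hℓ : 1 ≤ ℓ)
    (η : ℕ → ℝ) (hη : ∀ t : ℕ, η t = (ℓ : ℝ) / ((t : ℝ) + ℓ))
    (x v : ℕ → Eucl n)
    (hx0 : x 0 ∈ C)
    (hv : ∀ t : ℕ, IsFWVertex C f (x t) (v t))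
    (hstep : ∀ t : ℕ, x (t + 1) = x t + η t • (v t - x t))
    (ε : ℝ) (hε : ε ∈ Ioo (0 : ℝ) (ℓ : ℝ)) :
    (∃ ts : ℕ → ℕ, StrictMono ts ∧
        ∀ i : ℕ, suboptF C f (x (ts i)) ≤
          (η (ts i) * ℓ * M / (2 * ε)) ^ (1 / (1 - r))) ∨
      (∃ R : ℕ, 1 ≤ R ∧ ∀ t : ℕ, R + 1 ≤ t →
        suboptF C f (x t) ≤
          suboptF C f (x R) * (η (t - 1) / η (R - 1)) ^ ((ℓ : ℝ) - ε) *
            Real.exp (ε * ℓ / R)) :=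
  fw_weak_growth_dichotomy_general n C f hCconv hfconv U hUopen hCU hfdiff M r hM hr hweak ℓ hℓ η hη
    x v hx0 hv hstep ε hε
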